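/- arXiv:1203.2823 — 2 statements merged into one kernel-verified Lean document; each statement's English description precedes it below -/
import Mathlib

section
/- For all integers A, m and positive integer n with A = m−2: ∑_{k=0}^{n-1} C(2k,k)·m^{n-1-k} = ∑_{k=0}^{n-1} C(2n,k)·u_{n−k}(m−2,1), where u is the Lucas sequence with parameters (m−2, 1). -/
/-- The Lucas sequence `u_n(A,1)`: `u_0 = 0`, `u_1 = 1`, `u_{n+1} = A·u_n − u_{n−1}`. -/
def lucasU (A : ℤ) : ℕ → ℤ
  | 0 => 0
  | 1 => 1
  | n + 2 => A * lucasU A (n + 1) - lucasU A n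

lemma lucasU_add_two (A : ℤ) (n : ℕ) :
    lucasU A (n + 2) = A * lucasU A (n + 1) - lucasU A n := rfl

/-- Extension of `lucasU` to integer indices, with `U(-j) = -U(j)`. -/
def lucasUZ (A : ℤ) (j : ℤ) : ℤ :=
  if 0 ≤ j then lucasU A j.toNat else -lucasU A (-j).toNat

lemma lucasUZ_ofNat (A : ℤ) (n : ℕ) : lucasUZ A n = lucasU A n := by
  simp [lucasUZ]

lemma lucasUZ_neg_ofNat (A : ℤ) (n : ℕ) : lucasUZ A (-(n : ℤ)) = -lucasU A n := by
  cases n with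
  | zero => simp [lucasUZ, lucasU]
  | succ t =>
    simp only [lucasUZ]
    rw [if_neg (by push_cast; omega)]
    have h : (-(-((t : ℤ) + 1))).toNat = t + 1 := by omega
    push_cast
    rw [h]

lemma lucasUZ_rec (A : ℤ) (j : ℤ) :
    lucasUZ A (j + 1) = A * lucasUZ A j - lucasUZ A (j - 1) := by
  cases j with
  | ofNat n =>
    cases n with
    | zero =>
      show lucasUZ A 1 = A * lucasUZ A 0 - lucasUZ A (-1)
      have h1 : lucasUZ A (-1) = -lucasU A 1 := by
        have := lucasUZ_neg_ofNat A 1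
        norm_num at this
        exact this
      have h2 : lucasUZ A 1 = lucasU A 1 := lucasUZ_ofNat A 1
      have h3 : lucasUZ A 0 = lucasU A 0 := lucasUZ_ofNat A 0
      rw [h1, h2, h3]
      simp [lucasU]
    | succ t =>
      show lucasUZ A ((t : ℤ) + 1 + 1) = A * lucasUZ A ((t : ℤ) + 1) - lucasUZ A ((t : ℤ) + 1 - 1)
      have h0 : ((t : ℤ) + 1 + 1) = ((t + 2 : ℕ) : ℤ) := by push_cast; ring
      have h1 : ((t : ℤ) + 1) = ((t + 1 : ℕ) : ℤ) := by push_cast; ring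
      have h2 : ((t : ℤ) + 1 - 1) = ((t : ℕ) : ℤ) := by ring
      rw [h2, h0, h1, lucasUZ_ofNat, lucasUZ_ofNat, lucasUZ_ofNat, lucasU_add_two]
  | negSucc n =>
    -- j = -(n+1); j+1 = -n, j-1 = -(n+2)
    have e1 : (Int.negSucc n) + 1 = -(n : ℤ) := by
      rw [Int.negSucc_eq]; ring
    have e2 : (Int.negSucc n) = -((n + 1 : ℕ) : ℤ) := by rw [Int.negSucc_eq]; push_cast; ring
    have e3 : (Int.negSucc n) - 1 = -((n + 2 : ℕ) : ℤ) := by rw [Int.negSucc_eq]; push_cast; ring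
    rw [e3, e1, e2, lucasUZ_neg_ofNat, lucasUZ_neg_ofNat, lucasUZ_neg_ofNat, lucasU_add_two]
    ring

lemma lucasUZ_mul (A : ℤ) (z : ℤ) :
    (A + 2) * lucasUZ A z = lucasUZ A (z + 1) + 2 * lucasUZ A z + lucasUZ A (z - 1) := by
  have := lucasUZ_rec A z
  linarith [this]

/-- Pascal's rule summed against an arbitrary weight. -/
lemma pascal_sum (N r : ℕ) (g : ℕ → ℤ) :
    ∑ k ∈ Finset.range (r + 2), (Nat.choose (N + 1) k : ℤ) * g k =
      ∑ k ∈ Finset.range (r + 1), (Nat.choose N k : ℤ) * g (k + 1) +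
      ∑ k ∈ Finset.range (r + 2), (Nat.choose N k : ℤ) * g k := by
  rw [Finset.sum_range_succ' (fun k => (Nat.choose (N + 1) k : ℤ) * g k) (r + 1),
      Finset.sum_range_succ' (fun k => (Nat.choose N k : ℤ) * g k) (r + 1)]
  simp only [Nat.choose_succ_succ, Nat.choose_zero_right]
  push_cast
  rw [Finset.sum_congr rfl (fun k _ => by ring :
    ∀ k ∈ Finset.range (r + 1), ((Nat.choose N k : ℤ) + (Nat.choose N (k + 1) : ℤ)) * g (k + 1)
      = (Nat.choose N k : ℤ) * g (k + 1) + (Nat.choose N (k + 1) : ℤ) * g (k + 1)),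
    Finset.sum_add_distrib]
  ring

/-- Pascal's rule applied twice, summed against an arbitrary weight. -/
lemma double_pascal (M r : ℕ) (g : ℕ → ℤ) :
    ∑ k ∈ Finset.range (r + 3), (Nat.choose (M + 2) k : ℤ) * g k =
      ∑ k ∈ Finset.range (r + 1), (Nat.choose M k : ℤ) * g (k + 2)
      + 2 * ∑ k ∈ Finset.range (r + 2), (Nat.choose M k : ℤ) * g (k + 1)
      + ∑ k ∈ Finset.range (r + 3), (Nat.choose M k : ℤ) * g k := by
  rw [show r + 3 = (r + 1) + 2 from rfl, show M + 2 = (M + 1) + 1 from rfl,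
    pascal_sum (M + 1) (r + 1) g]
  rw [show r + 1 + 1 = r + 2 from rfl] -- normalize ranges
  rw [pascal_sum M r (fun k => g (k + 1)), pascal_sum M (r + 1) g]
  rw [show r + 1 + 2 = r + 2 + 1 from rfl]
  simp only [show ∀ k : ℕ, k + 1 + 1 = k + 2 from fun _ => rfl]
  ring

lemma key (m : ℤ) (n : ℕ) (hn : 1 ≤ n) :
    ∑ k ∈ Finset.range n, (Nat.choose (2 * k) k : ℤ) * m ^ (n - 1 - k) =
      ∑ k ∈ Finset.range (n + 1), (Nat.choose (2 * n) k : ℤ) * lucasUZ (m - 2) ((n : ℤ) - k) := by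
  induction n, hn using Nat.le_induction with
  | base =>
    norm_num [Finset.sum_range_succ, lucasUZ, lucasU]
  | succ n hn ih =>
    obtain ⟨p, rfl⟩ : ∃ p, n = p + 1 := ⟨n - 1, by omega⟩
    set A := m - 2 with hA
    have hL : ∑ k ∈ Finset.range (p + 1 + 1), (Nat.choose (2 * k) k : ℤ) * m ^ (p + 1 + 1 - 1 - k) =
        m * (∑ k ∈ Finset.range (p + 1), (Nat.choose (2 * k) k : ℤ) * m ^ (p + 1 - 1 - k)) +
          (Nat.choose (2 * (p + 1)) (p + 1) : ℤ) := by
      rw [Finset.sum_range_succ, Finset.mul_sum]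
      have : ∀ k ∈ Finset.range (p + 1),
          (Nat.choose (2 * k) k : ℤ) * m ^ (p + 1 + 1 - 1 - k) =
            m * ((Nat.choose (2 * k) k : ℤ) * m ^ (p + 1 - 1 - k)) := by
        intro k hk
        rw [Finset.mem_range] at hk
        have he : p + 1 + 1 - 1 - k = (p + 1 - 1 - k) + 1 := by omega
        rw [he, pow_succ]
        ring
      rw [Finset.sum_congr rfl this]
      simp
    rw [hL, ih]
    -- abbreviations for the five sums involved
    have hR : ∑ k ∈ Finset.range (p + 1 + 1 + 1),
          (Nat.choose (2 * (p + 1 + 1)) k : ℤ) * lucasUZ A (((p + 1 + 1 : ℕ) : ℤ) - k) =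
        (∑ k ∈ Finset.range (p + 1), (Nat.choose (2 * (p + 1)) k : ℤ) * lucasUZ A ((p : ℤ) - k))
        + 2 * ∑ k ∈ Finset.range (p + 2), (Nat.choose (2 * (p + 1)) k : ℤ) *
            lucasUZ A ((p : ℤ) + 1 - k)
        + ∑ k ∈ Finset.range (p + 3), (Nat.choose (2 * (p + 1)) k : ℤ) *
            lucasUZ A ((p : ℤ) + 2 - k) := by
      calc ∑ k ∈ Finset.range (p + 1 + 1 + 1),
            (Nat.choose (2 * (p + 1 + 1)) k : ℤ) * lucasUZ A (((p + 1 + 1 : ℕ) : ℤ) - k)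
          = ∑ k ∈ Finset.range (p + 3), (Nat.choose (2 * (p + 1) + 2) k : ℤ) *
              (fun k : ℕ => lucasUZ A ((p : ℤ) + 2 - k)) k := by
            refine Finset.sum_congr (by norm_num) fun k _ => ?_
            have h1 : 2 * (p + 1 + 1) = 2 * (p + 1) + 2 := by ring
            have h2 : ((p + 1 + 1 : ℕ) : ℤ) - k = (p : ℤ) + 2 - k := by push_cast; ring
            rw [h1, h2]
        _ = _ := by
            rw [double_pascal (2 * (p + 1)) p (fun k : ℕ => lucasUZ A ((p : ℤ) + 2 - k))]
            congr 1
            · congr 1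
              · refine Finset.sum_congr rfl fun k _ => ?_
                congr 1
                push_cast
                ring
              · congr 1
                refine Finset.sum_congr rfl fun k _ => ?_
                congr 1
                push_cast
                ring
    rw [hR]
    -- expand m * (previous RHS) using the recurrence
    have hX : m * (∑ k ∈ Finset.range (p + 1 + 1),
          (Nat.choose (2 * (p + 1)) k : ℤ) * lucasUZ A (((p + 1 : ℕ) : ℤ) - k)) =
        (∑ k ∈ Finset.range (p + 2), (Nat.choose (2 * (p + 1)) k : ℤ) *
            lucasUZ A ((p : ℤ) + 2 - k))
        + 2 * (∑ k ∈ Finset.range (p + 2), (Nat.choose (2 * (p + 1)) k : ℤ) *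
            lucasUZ A ((p : ℤ) + 1 - k))
        + ∑ k ∈ Finset.range (p + 2), (Nat.choose (2 * (p + 1)) k : ℤ) *
            lucasUZ A ((p : ℤ) - k) := by
      rw [Finset.mul_sum]
      have step : ∀ k ∈ Finset.range (p + 2),
          m * ((Nat.choose (2 * (p + 1)) k : ℤ) * lucasUZ A (((p + 1 : ℕ) : ℤ) - k)) =
            (Nat.choose (2 * (p + 1)) k : ℤ) * lucasUZ A ((p : ℤ) + 2 - k)
            + 2 * ((Nat.choose (2 * (p + 1)) k : ℤ) * lucasUZ A ((p : ℤ) + 1 - k))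
            + (Nat.choose (2 * (p + 1)) k : ℤ) * lucasUZ A ((p : ℤ) - k) := by
        intro k _
        have hmU := lucasUZ_mul A (((p + 1 : ℕ) : ℤ) - k)
        have e1 : (((p + 1 : ℕ) : ℤ) - k + 1) = (p : ℤ) + 2 - k := by push_cast; ring
        have e2 : (((p + 1 : ℕ) : ℤ) - k - 1) = (p : ℤ) - k := by push_cast; ring
        have e3 : (((p + 1 : ℕ) : ℤ) - k) = (p : ℤ) + 1 - k := by push_cast; ring
        rw [e1, e2, e3] at hmU
        have hm : A + 2 = m := by rw [hA]; ring
        rw [hm] at hmU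
        calc m * ((Nat.choose (2 * (p + 1)) k : ℤ) * lucasUZ A (((p + 1 : ℕ) : ℤ) - k))
            = (Nat.choose (2 * (p + 1)) k : ℤ) * (m * lucasUZ A ((p : ℤ) + 1 - k)) := by
              rw [show lucasUZ A (((p + 1 : ℕ) : ℤ) - k) = lucasUZ A ((p : ℤ) + 1 - k) by rw [e3]]
              ring
          _ = _ := by rw [hmU]; ring
      rw [show p + 1 + 1 = p + 2 from rfl, Finset.sum_congr rfl step]
      rw [Finset.sum_add_distrib, Finset.sum_add_distrib, ← Finset.mul_sum]
    rw [hX]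
    -- peel boundary terms
    have hS1 : ∑ k ∈ Finset.range (p + 3), (Nat.choose (2 * (p + 1)) k : ℤ) *
          lucasUZ A ((p : ℤ) + 2 - k) =
        ∑ k ∈ Finset.range (p + 2), (Nat.choose (2 * (p + 1)) k : ℤ) *
          lucasUZ A ((p : ℤ) + 2 - k) := by
      rw [show p + 3 = (p + 2) + 1 from rfl, Finset.sum_range_succ]
      have e : ((p : ℤ) + 2 - ((p + 2 : ℕ) : ℤ)) = 0 := by push_cast; ring
      rw [e, show lucasUZ A 0 = 0 by simp [lucasUZ, lucasU]]
      ring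
    have hX2 : ∑ k ∈ Finset.range (p + 2), (Nat.choose (2 * (p + 1)) k : ℤ) *
          lucasUZ A ((p : ℤ) - k) =
        (∑ k ∈ Finset.range (p + 1), (Nat.choose (2 * (p + 1)) k : ℤ) *
          lucasUZ A ((p : ℤ) - k)) - (Nat.choose (2 * (p + 1)) (p + 1) : ℤ) := by
      rw [show p + 2 = (p + 1) + 1 from rfl, Finset.sum_range_succ]
      have e : ((p : ℤ) - ((p + 1 : ℕ) : ℤ)) = -(1 : ℤ) := by push_cast; ring
      have eU : lucasUZ A (-(1 : ℤ)) = -1 := by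
        have := lucasUZ_neg_ofNat A 1
        norm_num at this
        rw [this]
        simp [lucasU]
      rw [e, eU]
      ring
    rw [hS1, hX2]
    ring

/-- Sun–Tauraso identity: `∑_{k<n} C(2k,k)·m^{n−1−k} = ∑_{k<n} C(2n,k)·u_{n−k}(m−2,1)`. -/
theorem stmt_12 (m : ℤ) (n : ℕ) (hn : 0 < n) :
    ∑ k ∈ Finset.range n, (Nat.choose (2 * k) k : ℤ) * m ^ (n - 1 - k) =
      ∑ k ∈ Finset.range n, (Nat.choose (2 * n) k : ℤ) * lucasU (m - 2) (n - k) := by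
  rw [key m n hn, Finset.sum_range_succ]
  have h0 : lucasUZ (m - 2) ((n : ℤ) - n) = 0 := by
    simp [lucasUZ, lucasU]
  rw [h0, mul_zero, add_zero]
  refine Finset.sum_congr rfl fun k hk => ?_
  rw [Finset.mem_range] at hk
  have hc : ((n : ℤ) - k) = ((n - k : ℕ) : ℤ) := by
    rw [Nat.cast_sub hk.le]
  rw [hc, lucasUZ_ofNat]
end

section
/- For every positive integer n: 4^{n−1}·∑_{k=0}^{n−1} (−1)^k·C(2k,k)·C(n−1,k) = ∑_{k=0}^{n−1} (−3)^k·C(2k,k)·C(2(n−1−k), n−1−k). -/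
/-!
Over a field of characteristic zero `C(2j, j) = (-4)^j C(-1/2, j)`, so
`C(2j, j) C(j, i) = (-4)^j C(-1/2, i) C(-1/2 - i, j - i)`, and Chu–Vandermonde collapses
`∑_j C(2j, j) C(j, i) C(2(m-j), m-j)` to
`(-4)^m C(-1/2, i) C(-1 - i, m - i) = 4^(m-i) C(2i, i) C(m, i)`.
Expanding `(1 - 4x)^j = ∑_i C(j, i) (-4x)^i` and exchanging the two sums then gives
`4^m ∑_k C(2k, k) C(m, k) (-x)^k = ∑_j C(2j, j) C(2(m-j), m-j) (1 - 4x)^j`; take `x = 1`.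
-/
open Finset Polynomial

namespace Ring
variable {R : Type*} [CommRing R] [BinomialRing R]
attribute [local instance] BinomialRing.toIsAddTorsionFree

theorem succ_nsmul_choose_succ (r : R) (k : ℕ) :
    (k + 1) • choose r (k + 1) = (r - k) * choose r k := by
  rw [← nsmul_right_inj (Nat.factorial_ne_zero k)]
  calc k.factorial • (k + 1) • choose r (k + 1)
      = (descPochhammer ℤ (k + 1)).smeval r := by
        rw [descPochhammer_eq_factorial_smul_choose, Nat.factorial_succ, smul_smul, mul_comm]
    _ = k.factorial • ((r - k) * choose r k) := by
        rw [descPochhammer_succ_right, smeval_mul, descPochhammer_eq_factorial_smul_choose,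
          smeval_sub, smeval_X, smeval_natCast, pow_one, pow_zero, smul_mul_assoc, mul_comm,
          nsmul_one]

theorem choose_neg_one_sub_natCast (i t : ℕ) :
    choose (-1 - i : R) t = (-1) ^ t * (i + t).choose t := by
  rw [show (-1 - i : R) = -(1 + i) by ring, choose_neg,
    show (1 + i + t - 1 : R) = ((i + t : ℕ) : R) by push_cast; ring, choose_natCast,
    Int.negOnePow_def, Units.smul_def, zsmul_eq_mul]
  simp

end Ring

section CentralBinom
variable {K : Type*} [Field K] [CharZero K]

theorem Ring.choose_neg_half (k : ℕ) :
    Ring.choose (-2⁻¹ : K) k = (-4⁻¹) ^ k * k.centralBinom := by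
  induction k with
  | zero => simp
  | succ k ih =>
    have hrec := Ring.succ_nsmul_choose_succ (-2⁻¹ : K) k
    have hcb : ((k + 1 : ℕ) : K) * (k + 1).centralBinom = 2 * (2 * k + 1) * k.centralBinom := by
      exact_mod_cast Nat.succ_mul_centralBinom_succ k
    rw [ih, nsmul_eq_mul] at hrec
    apply mul_left_cancel₀ (Nat.cast_add_one_ne_zero k : ((k : K) + 1) ≠ 0)
    push_cast at hrec hcb ⊢
    rw [hrec]
    linear_combination (-(-4⁻¹ : K) ^ (k + 1)) * hcb

theorem Nat.cast_centralBinom_eq_neg_four_pow_mul_choose (k : ℕ) :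
    (k.centralBinom : K) = (-4) ^ k * Ring.choose (-2⁻¹ : K) k := by
  rw [Ring.choose_neg_half, ← mul_assoc, ← mul_pow]
  norm_num

theorem Nat.cast_centralBinom_mul_choose (i t : ℕ) :
    ((i + t).centralBinom : K) * (i + t).choose i =
      (-4) ^ (i + t) * Ring.choose (-2⁻¹ : K) i * Ring.choose (-2⁻¹ - i : K) t := by
  have h := Ring.choose_smul_choose (-2⁻¹ : K) (Nat.le_add_right i t)
  rw [nsmul_eq_mul, Nat.add_sub_cancel_left] at h
  rw [Nat.cast_centralBinom_eq_neg_four_pow_mul_choose, mul_assoc,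
    mul_comm _ ((i + t).choose i : K), h, mul_assoc]

end CentralBinom

theorem Nat.sum_centralBinom_mul_choose_mul_centralBinom {i m : ℕ} (him : i ≤ m) :
    ∑ j ∈ range (m + 1), j.centralBinom * j.choose i * (m - j).centralBinom =
      4 ^ (m - i) * i.centralBinom * m.choose i := by
  obtain ⟨l, rfl⟩ := Nat.exists_eq_add_of_le him
  have hsplit :
      ∑ j ∈ range (i + l + 1), j.centralBinom * j.choose i * (i + l - j).centralBinom =
      ∑ t ∈ range (l + 1), (i + t).centralBinom * (i + t).choose i * (l - t).centralBinom := by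
    rw [add_assoc, sum_range_add, sum_eq_zero fun j hj => by
      rw [Nat.choose_eq_zero_of_lt (mem_range.mp hj), mul_zero, zero_mul], zero_add]
    simp only [Nat.add_sub_add_left]
  have hvandermonde : ∑ t ∈ range (l + 1),
      Ring.choose (-2⁻¹ - i : ℚ) t * Ring.choose (-2⁻¹ : ℚ) (l - t) =
        (-1) ^ l * (i + l).choose l := by
    have h := Ring.add_choose_eq l (Commute.all (-2⁻¹ - i : ℚ) (-2⁻¹))
    rw [Finset.Nat.sum_antidiagonal_eq_sum_range_succ_mk,
      show (-2⁻¹ - i + -2⁻¹ : ℚ) = -1 - i by ring, Ring.choose_neg_one_sub_natCast] at h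
    exact h.symm
  have hterm : ∀ t ∈ range (l + 1),
      ((i + t).centralBinom * (i + t).choose i * (l - t).centralBinom : ℚ) =
        (-4) ^ (i + l) * Ring.choose (-2⁻¹) i *
          (Ring.choose (-2⁻¹ - i : ℚ) t * Ring.choose (-2⁻¹) (l - t)) := by
    intro t ht
    obtain ⟨u, rfl⟩ := Nat.exists_eq_add_of_le (Nat.lt_succ_iff.mp (mem_range.mp ht))
    rw [Nat.cast_centralBinom_mul_choose, Nat.add_sub_cancel_left,
      Nat.cast_centralBinom_eq_neg_four_pow_mul_choose, ← add_assoc, pow_add]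
    ring
  rw [hsplit, Nat.add_sub_cancel_left, ← Nat.cast_inj (R := ℚ)]
  push_cast
  rw [sum_congr rfl hterm, ← mul_sum, hvandermonde,
    Nat.cast_centralBinom_eq_neg_four_pow_mul_choose, Nat.choose_symm_add, pow_add,
    show (4 : ℚ) ^ l = (-4) ^ l * (-1) ^ l by rw [← mul_pow]; norm_num]
  ring

theorem add_one_pow_eq_sum_range_mul_choose {R : Type*} [CommSemiring R] (y : R) {j m : ℕ}
    (hjm : j ≤ m) : (y + 1) ^ j = ∑ i ∈ range (m + 1), y ^ i * j.choose i := by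
  rw [add_pow]
  simp only [one_pow, mul_one]
  refine sum_subset (range_subset_range.mpr (by omega)) fun i _ hi => ?_
  rw [Nat.choose_eq_zero_of_lt (by simpa using hi), Nat.cast_zero, mul_zero]

theorem four_pow_mul_sum_neg_pow_mul_centralBinom_mul_choose {R : Type*} [CommRing R] (x : R)
    (m : ℕ) :
    4 ^ m * ∑ k ∈ range (m + 1), (-x) ^ k * k.centralBinom * m.choose k =
      ∑ j ∈ range (m + 1), (1 - 4 * x) ^ j * j.centralBinom * (m - j).centralBinom := by
  have hexpand : ∀ j ∈ range (m + 1), (1 - 4 * x) ^ j * j.centralBinom * (m - j).centralBinom =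
      ∑ i ∈ range (m + 1), (-4 * x) ^ i * (j.centralBinom * j.choose i * (m - j).centralBinom :
        ℕ) := by
    intro j hj
    rw [show 1 - 4 * x = -4 * x + 1 by ring,
      add_one_pow_eq_sum_range_mul_choose _ (Nat.lt_succ_iff.mp (mem_range.mp hj)), sum_mul,
      sum_mul]
    refine sum_congr rfl fun i _ => ?_
    push_cast
    ring
  rw [sum_congr rfl hexpand, sum_comm, mul_sum]
  refine sum_congr rfl fun i hi => ?_
  have him := Nat.lt_succ_iff.mp (mem_range.mp hi)
  rw [← mul_sum, ← Nat.cast_sum, Nat.sum_centralBinom_mul_choose_mul_centralBinom him,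
    show (-4 * x) ^ i = (-x) ^ i * 4 ^ i by rw [← mul_pow]; ring,
    show (4 : R) ^ m = 4 ^ (m - i) * 4 ^ i by rw [← pow_add, Nat.sub_add_cancel him]]
  push_cast
  ring

theorem stmt_15_general (n : ℕ) :
    4 ^ (n - 1) * ∑ k ∈ Finset.range n,
        (-1) ^ k * (Nat.choose (2 * k) k : ℤ) * (Nat.choose (n - 1) k : ℤ) =
      ∑ k ∈ Finset.range n,
        (-3) ^ k * (Nat.choose (2 * k) k : ℤ) *
          (Nat.choose (2 * (n - 1 - k)) (n - 1 - k) : ℤ) := by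
  cases n with
  | zero => simp
  | succ m =>
    have h := four_pow_mul_sum_neg_pow_mul_centralBinom_mul_choose (1 : ℤ) m
    norm_num [Nat.centralBinom_eq_two_mul_choose] at h ⊢
    exact h

theorem stmt_15 (n : ℕ) (hn : 0 < n) :
    4 ^ (n - 1) * ∑ k ∈ Finset.range n,
        (-1) ^ k * (Nat.choose (2 * k) k : ℤ) * (Nat.choose (n - 1) k : ℤ) =
      ∑ k ∈ Finset.range n,
        (-3) ^ k * (Nat.choose (2 * k) k : ℤ) *
          (Nat.choose (2 * (n - 1 - k)) (n - 1 - k) : ℤ) :=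
  stmt_15_general n
end
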